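/- arXiv:math/0505577 — 2 statements merged into one kernel-verified Lean document; each statement's English description precedes it below -/
import Mathlib

section
/- Let h be a positive definite Hermitian n×n matrix and F_{ijk} a symmetric complex array. Define R_{i j̄ k l̄} = -(1/4) Σ_{m,n} h^{m n̄} F_{ikm} conj(F_{jln}) and the scalar curvature ρ = (1/4) Σ h^{i ī₁} h^{j j̄₁} h^{k k̄₁} F_{ijk} conj(F_{i₁j₁k₁}). If ρ = 0, then F_{ijk} = 0 for all i, j, k, and consequently R_{i j̄ k l̄} = 0 for all indices. -/
/-!
Writing `g = h⁻¹`, which is positive definite, `4ρ` is the value at `F̄` of the Hermitian form of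
the Kronecker cube `g ⊗ g ⊗ g` on three-tensors. That matrix is again positive definite, so
`ρ = 0` forces `F = 0`, and then every `R_{i j̄ k l̄}` vanishes.
-/

open Complex Finset ComplexOrder

open Matrix

open scoped Kronecker

variable {𝕜 ι : Type*} [RCLike 𝕜] [Fintype ι]

theorem Matrix.sum_kronecker_three_mul_star (g : Matrix ι ι 𝕜) (T : ι → ι → ι → 𝕜) :
    ∑ i, ∑ i₁, ∑ j, ∑ j₁, ∑ k, ∑ k₁,
        g i i₁ * g j j₁ * g k k₁ * T i j k * starRingEnd 𝕜 (T i₁ j₁ k₁) =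
      star (fun p : (ι × ι) × ι ↦ star (T p.1.1 p.1.2 p.2)) ⬝ᵥ
        (g ⊗ₖ g ⊗ₖ g *ᵥ fun p ↦ star (T p.1.1 p.1.2 p.2)) := by
  simp only [dotProduct, mulVec, Fintype.sum_prod_type, kronecker_apply, Pi.star_apply, star_star,
    Finset.mul_sum]
  refine sum_congr rfl fun i _ ↦ sum_comm.trans <| sum_congr rfl fun j _ ↦ ?_
  refine (sum_congr rfl fun i₁ _ ↦ sum_comm).trans <| sum_comm.trans <|
    sum_congr rfl fun k _ ↦ sum_congr rfl fun i₁ _ ↦ sum_congr rfl fun j₁ _ ↦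
      sum_congr rfl fun k₁ _ ↦ ?_
  simp only [RCLike.star_def]
  ring

theorem Matrix.PosDef.eq_zero_of_sum_kronecker_three_mul_star_eq_zero {g : Matrix ι ι 𝕜}
    (hg : g.PosDef) {T : ι → ι → ι → 𝕜}
    (hT : ∑ i, ∑ i₁, ∑ j, ∑ j₁, ∑ k, ∑ k₁,
        g i i₁ * g j j₁ * g k k₁ * T i j k * starRingEnd 𝕜 (T i₁ j₁ k₁) = 0) :
    T = 0 := by
  by_contra hT0
  have hv : (fun p : (ι × ι) × ι ↦ star (T p.1.1 p.1.2 p.2)) ≠ 0 := by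
    refine fun hv ↦ hT0 (funext₃ fun i j k ↦ ?_)
    simpa using congrFun hv ((i, j), k)
  have hpos := ((hg.kronecker hg).kronecker hg).dotProduct_mulVec_pos hv
  rw [← sum_kronecker_three_mul_star, hT] at hpos
  exact hpos.false

theorem scalar_zero_implies_flat_general (n : ℕ) (h : Matrix (Fin n) (Fin n) ℂ) (hh : h.PosDef)
    (F : Fin n → Fin n → Fin n → ℂ)
    (R : Fin n → Fin n → Fin n → Fin n → ℂ)
    (hR : ∀ i j k l, R i j k l =
      -(1/4) * ∑ m, ∑ m', h⁻¹ m m' * F i k m * (starRingEnd ℂ) (F j l m'))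
    (ρ : ℂ)
    (hρ : ρ = (1/4) * ∑ i, ∑ i₁, ∑ j, ∑ j₁, ∑ k, ∑ k₁,
      h⁻¹ i i₁ * h⁻¹ j j₁ * h⁻¹ k k₁ * F i j k * (starRingEnd ℂ) (F i₁ j₁ k₁))
    (hzero : ρ = 0) :
    (∀ i j k, F i j k = 0) ∧ (∀ i j k l, R i j k l = 0) := by
  have hsum : ∑ i, ∑ i₁, ∑ j, ∑ j₁, ∑ k, ∑ k₁,
      h⁻¹ i i₁ * h⁻¹ j j₁ * h⁻¹ k k₁ * F i j k * (starRingEnd ℂ) (F i₁ j₁ k₁) = 0 := by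
    simpa [hzero] using hρ
  have hF : F = 0 := hh.inv.eq_zero_of_sum_kronecker_three_mul_star_eq_zero hsum
  exact ⟨fun i j k ↦ by simp [hF], fun i j k l ↦ by simp [hR, hF]⟩

theorem scalar_zero_implies_flat (n : ℕ) (h : Matrix (Fin n) (Fin n) ℂ) (hh : h.PosDef)
    (F : Fin n → Fin n → Fin n → ℂ)
    (hF : ∀ i j k, F i j k = F j i k ∧ F i j k = F i k j)
    (R : Fin n → Fin n → Fin n → Fin n → ℂ)
    (hR : ∀ i j k l, R i j k l =
      -(1/4) * ∑ m, ∑ m', h⁻¹ m m' * F i k m * (starRingEnd ℂ) (F j l m'))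
    (ρ : ℂ)
    (hρ : ρ = (1/4) * ∑ i, ∑ i₁, ∑ j, ∑ j₁, ∑ k, ∑ k₁,
      h⁻¹ i i₁ * h⁻¹ j j₁ * h⁻¹ k k₁ * F i j k * (starRingEnd ℂ) (F i₁ j₁ k₁))
    (hzero : ρ = 0) :
    (∀ i j k, F i j k = 0) ∧ (∀ i j k l, R i j k l = 0) :=
  scalar_zero_implies_flat_general n h hh F R hR ρ hρ hzero
end

section
/- Let u be a holomorphic function on an open set U ⊆ ℂ (one complex variable) such that h = Im u'' > 0 on U. For the Kähler metric h |dz|², the curvature component R_{1 1̄ 1 1̄} = ∂²h/∂z∂z̄ − h^{-1} |∂h/∂z|² equals −(1/4) h^{-1} |u'''|². -/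
open Complex

/-- The Wirtinger derivative `∂f/∂z = (1/2)(∂f/∂x − i ∂f/∂y)` of `f : ℂ → ℂ`,
computed from the real Fréchet derivative. -/
noncomputable def wderiv (f : ℂ → ℂ) (z : ℂ) : ℂ :=
  (1/2) * (fderiv ℝ f z 1 - Complex.I * fderiv ℝ f z Complex.I)

/-- The conjugate Wirtinger derivative `∂f/∂z̄ = (1/2)(∂f/∂x + i ∂f/∂y)`. -/
noncomputable def wderivBar (f : ℂ → ℂ) (z : ℂ) : ℂ :=
  (1/2) * (fderiv ℝ f z 1 + Complex.I * fderiv ℝ f z Complex.I)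

lemma imC_fderiv (f : ℂ → ℂ) (z : ℂ) (hf : DifferentiableAt ℂ f z) (v : ℂ) :
    fderiv ℝ (fun w => ((f w).im : ℂ)) z v = ((v * deriv f z).im : ℂ) := by
  have H : HasFDerivAt (fun w => ((f w).im : ℂ))
      (Complex.ofRealCLM.comp (Complex.imCLM.comp
        (((ContinuousLinearMap.id ℂ ℂ).smulRight (deriv f z)).restrictScalars ℝ))) z :=
    Complex.ofRealCLM.hasFDerivAt.comp z (Complex.imCLM.hasFDerivAt.comp z
      (hf.hasDerivAt.hasFDerivAt.restrictScalars ℝ))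
  rw [H.fderiv]
  simp [smul_eq_mul]

lemma wderiv_imC (f : ℂ → ℂ) (z : ℂ) (hf : DifferentiableAt ℂ f z) :
    wderiv (fun w => ((f w).im : ℂ)) z = -(Complex.I/2) * deriv f z := by
  rw [wderiv, imC_fderiv f z hf, imC_fderiv f z hf]
  simp [Complex.ext_iff]

lemma wderivBar_imC (f : ℂ → ℂ) (z : ℂ) (hf : DifferentiableAt ℂ f z) :
    wderivBar (fun w => ((f w).im : ℂ)) z = (Complex.I/2) * (starRingEnd ℂ) (deriv f z) := by
  rw [wderivBar, imC_fderiv f z hf, imC_fderiv f z hf]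
  simp [Complex.ext_iff]

lemma conj_fderiv (F : ℂ → ℂ) (z : ℂ) (hF : DifferentiableAt ℂ F z) (c : ℂ) (v : ℂ) :
    fderiv ℝ (fun w => c * (starRingEnd ℂ) (F w)) z v
      = c * (starRingEnd ℂ) (v * deriv F z) := by
  have h1 := hF.hasDerivAt.hasFDerivAt.restrictScalars ℝ
  have h2 : HasFDerivAt (fun w => (starRingEnd ℂ) (F w))
      ((Complex.conjCLE.toContinuousLinearMap).comp
        (((ContinuousLinearMap.id ℂ ℂ).smulRight (deriv F z)).restrictScalars ℝ)) z :=
    Complex.conjCLE.hasFDerivAt.comp z h1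
  have h3 := h2.const_mul c
  rw [h3.fderiv]
  simp [smul_eq_mul]

theorem special_kahler_curvature_dim_one (U : Set ℂ) (hU : IsOpen U)
    (u : ℂ → ℂ) (hu : DifferentiableOn ℂ u U)
    (h : ℂ → ℂ) (hdef : ∀ z, h z = ((iteratedDeriv 2 u z).im : ℂ))
    (hpos : ∀ z ∈ U, 0 < (iteratedDeriv 2 u z).im) :
    ∀ z ∈ U,
      wderiv (fun w => wderivBar h w) z - (h z)⁻¹ * (‖wderiv h z‖ : ℂ) ^ 2
        = -(1/4) * (h z)⁻¹ * (‖iteratedDeriv 3 u z‖ : ℂ) ^ 2 := by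
  intro z hz
  set f := iteratedDeriv 2 u with hf_def
  have hh : h = fun w => ((f w).im : ℂ) := funext hdef
  have ha : AnalyticOnNhd ℂ u U := hu.analyticOnNhd hU
  have hfa : AnalyticOnNhd ℂ f U := by
    rw [hf_def, iteratedDeriv_eq_iterate]
    exact ha.iterated_deriv 2
  have hFa : AnalyticOnNhd ℂ (deriv f) U := hfa.deriv
  have hfd : ∀ w ∈ U, DifferentiableAt ℂ f w := fun w hw => (hfa w hw).differentiableAt
  have hFd : DifferentiableAt ℂ (deriv f) z := (hFa z hz).differentiableAt
  -- Step 1: the mixed second Wirtinger derivative vanishes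
  have heq : (fun w => wderivBar h w) =ᶠ[nhds z]
      (fun w => (Complex.I/2) * (starRingEnd ℂ) (deriv f w)) := by
    filter_upwards [hU.mem_nhds hz] with w hw
    rw [hh, wderivBar_imC f w (hfd w hw)]
  have hfd1 : fderiv ℝ (fun w => wderivBar h w) z
      = fderiv ℝ (fun w => (Complex.I/2) * (starRingEnd ℂ) (deriv f w)) z :=
    heq.fderiv_eq
  have hzero : wderiv (fun w => wderivBar h w) z = 0 := by
    rw [wderiv, hfd1, conj_fderiv (deriv f) z hFd, conj_fderiv (deriv f) z hFd]
    simp [map_mul]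
    linear_combination (Complex.I * (starRingEnd ℂ) (deriv (deriv f) z) * (1/2)) * Complex.I_sq
  -- Step 2: the first Wirtinger derivative of h
  have hw1 : wderiv h z = -(Complex.I/2) * deriv f z := by
    rw [hh]; exact wderiv_imC f z (hfd z hz)
  have habs : (‖wderiv h z‖ : ℂ) ^ 2
      = (‖deriv f z‖ : ℂ) ^ 2 / 4 := by
    rw [hw1, norm_mul]
    push_cast
    rw [mul_pow]
    norm_num [norm_neg, norm_div, Complex.norm_I]
    ring
  have h3 : iteratedDeriv 3 u z = deriv f z := by
    rw [hf_def, ← iteratedDeriv_succ]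
  rw [hzero, habs, h3]
  ring
end
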